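/- arXiv:1811.11086 — 4 statements merged into one kernel-verified Lean document; each statement's English description precedes it below -/
import Mathlib

section
/- Let A be a finite-dimensional commutative algebra over a field k. Then the set of idempotent elements of A is finite. -/
/-
Idempotents `e` of a commutative ring correspond to the clopen subsets `D(e)` of its prime
spectrum. A finite-dimensional algebra over a field is Artinian, so its spectrum is finite and
has only finitely many clopen subsets.
-/

theorem setOf_isIdempotentElem_finite_of_finite_primeSpectrum (R : Type*) [CommRing R]
    [Finite (PrimeSpectrum R)] : {e : R | IsIdempotentElem e}.Finite := by
  have : Finite (TopologicalSpace.Clopens (PrimeSpectrum R)) :=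
    .of_injective _ SetLike.coe_injective
  exact Set.finite_coe_iff.mp
    (.of_equiv _ PrimeSpectrum.isIdempotentElemEquivClopens.symm.toEquiv)

/-- The set of idempotents of a finite-dimensional commutative algebra over a field is finite. -/
theorem idempotents_finite (k A : Type*) [Field k] [CommRing A] [Algebra k A]
    [FiniteDimensional k A] : {e : A | e * e = e}.Finite := by
  have : IsArtinianRing A := isArtinian_of_tower k inferInstance
  exact setOf_isIdempotentElem_finite_of_finite_primeSpectrum A
end

section
/- Let φ : A → A' be a surjective homomorphism of commutative rings, s₁, …, s_l ∈ A, and a ∈ A. Assume: (1) a lies in the ideal (s₁, …, s_l); (2) there exist w'₁, …, w'_l ∈ A' with φ(a) = Σᵢ w'ᵢ φ(sᵢ); and (3) every relation Σᵢ v'ᵢ φ(sᵢ) = 0 in A' lifts to a relation Σᵢ vᵢ sᵢ = 0 in A with φ(vᵢ) = v'ᵢ. Then there exist w₁, …, w_l ∈ A with a = Σᵢ wᵢ sᵢ and φ(wᵢ) = w'ᵢ for all i. -/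
/-- Lifting a prescribed expression of `a` as a combination of the `sᵢ` along a surjection
`φ : A → A'`, assuming relations among the `φ(sᵢ)` lift to relations among the `sᵢ`. -/
theorem lift_combination {A A' : Type*} [CommRing A] [CommRing A'] (φ : A →+* A')
    (hφ : Function.Surjective φ) (l : ℕ) (s : Fin l → A) (a : A)
    (ha : a ∈ Ideal.span (Set.range s)) (w' : Fin l → A')
    (hw' : φ a = ∑ i, w' i * φ (s i))
    (hlift : ∀ v' : Fin l → A', ∑ i, v' i * φ (s i) = 0 →
      ∃ v : Fin l → A, ∑ i, v i * s i = 0 ∧ ∀ i, φ (v i) = v' i) :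
    ∃ w : Fin l → A, a = ∑ i, w i * s i ∧ ∀ i, φ (w i) = w' i := by
  rw [← Ideal.submodule_span_eq, Submodule.mem_span_range_iff_exists_fun] at ha
  obtain ⟨u, hu⟩ := ha
  simp only [smul_eq_mul] at hu
  have hrel : ∑ i, (φ (u i) - w' i) * φ (s i) = 0 := by
    have : φ (∑ i, u i * s i) = ∑ i, φ (u i) * φ (s i) := by
      simp [map_sum]
    rw [hu] at this
    rw [hw'] at this
    simp [sub_mul, Finset.sum_sub_distrib, ← this]
  obtain ⟨v, hv, hφv⟩ := hlift _ hrel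
  refine ⟨fun i => u i - v i, ?_, fun i => ?_⟩
  · simp [sub_mul, Finset.sum_sub_distrib, hu, hv]
  · simp [hφv i]
end

section
/- Let f : Z → X be a finite locally free morphism of schemes, and let A = f_*(O_Z), a finite locally free O_X-algebra. Let Id(Z) → X be the scheme over X whose T-points (for an X-scheme T) are the idempotent elements of A ⊗_{O_X} O_T. Then Id(Z) → X is étale. -/
/-!
A dual basis `(aᵢ, φᵢ)` of the finite projective `R`-module `A` exhibits `A ⊗[R] T` as a retract
of `Tⁿ`, via `t ↦ ∑ aⱼ ⊗ tⱼ` and `e ↦ (φᵢ e)ᵢ`. An idempotent `e` is then the same as a tuple `t`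
with `tᵢ = φᵢ((∑ aⱼ ⊗ tⱼ)²)`: these `n` equations already force `t` into the retract. Hence `Id(Z)`
is the spectrum of a finitely presented quotient of `R[X₁, …, Xₙ]`. It is formally étale because
idempotents lift uniquely along nil ideals, and the kernel of `A ⊗ B → A ⊗ B/I` is nil when `I` is.
-/

universe u

open TensorProduct

/-- Data of an étale model for the scheme of idempotents `Id(Z)` of a finite locally free
cover `Z → X = Spec R` with `A = O(Z)`: an étale `R`-algebra `C` whose `T`-points, for every
`R`-algebra `T`, are the idempotents of `A ⊗_R T`. -/
structure EtaleIdempotentModel (R A : Type u) [CommRing R] [CommRing A] [Algebra R A] :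
    Type (u + 1) where
  C : Type u
  [commRingC : CommRing C]
  [algebraC : Algebra R C]
  etale : Algebra.Etale R C
  represents : ∀ (T : Type u) [CommRing T] [Algebra R T],
    Nonempty ((C →ₐ[R] T) ≃ {e : A ⊗[R] T // e * e = e})

theorem bijective_subtypeMap_isIdempotentElem {S S' F : Type*} [CommRing S] [Ring S']
    [FunLike F S S'] [RingHomClass F S S'] (f : F) (hf : Function.Surjective f)
    (hker : RingHom.ker f ≤ nilradical S) :
    Function.Bijective (Subtype.map f fun _ he ↦ he.map f :
      {e : S // IsIdempotentElem e} → {e : S' // IsIdempotentElem e}) := by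
  refine (Function.bijective_iff_existsUnique _).2 fun e ↦ ?_
  obtain ⟨e', ⟨he', hfe'⟩, huniq⟩ := existsUnique_isIdempotentElem_eq_of_ker_isNilpotent
    (f : S →+* S') (fun x hx ↦ mem_nilradical.1 (hker hx)) e.1 (hf e.1) e.2
  exact ⟨⟨e', he'⟩, Subtype.ext hfe',
    fun x hx ↦ Subtype.ext (huniq x ⟨x.2, congrArg Subtype.val hx⟩)⟩

theorem Algebra.TensorProduct.ker_map_id_le_nilradical {R A B B' : Type*} [CommRing R]
    [CommRing A] [Algebra R A] [CommRing B] [Algebra R B] [CommRing B'] [Algebra R B']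
    (g : B →ₐ[R] B') (hg : Function.Surjective g) (hker : RingHom.ker g ≤ nilradical B) :
    RingHom.ker (map (AlgHom.id R A) g) ≤ nilradical (A ⊗[R] B) := by
  rw [lTensor_ker g hg, Ideal.map_le_iff_le_comap]
  exact fun x hx ↦ Ideal.mem_comap.2 (mem_nilradical.2 ((mem_nilradical.1 (hker hx)).map _))

theorem Algebra.FormallyEtale.of_equiv_idempotents {R A C : Type u} [CommRing R] [CommRing A]
    [Algebra R A] [CommRing C] [Algebra R C]
    (Φ : ∀ (T : Type u) [CommRing T] [Algebra R T],
      (C →ₐ[R] T) ≃ {e : A ⊗[R] T // IsIdempotentElem e})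
    (hΦ : ∀ (T T' : Type u) [CommRing T] [Algebra R T] [CommRing T'] [Algebra R T']
      (g : T →ₐ[R] T') (f : C →ₐ[R] T),
      (Φ T' (g.comp f) : A ⊗[R] T') = Algebra.TensorProduct.map (AlgHom.id R A) g (Φ T f)) :
    Algebra.FormallyEtale R C := by
  rw [Algebra.FormallyEtale.iff_comp_bijective]
  intro B _ _ I hI
  set q := Ideal.Quotient.mkₐ R I
  set Q := Algebra.TensorProduct.map (AlgHom.id R A) q
  have hker : RingHom.ker q ≤ nilradical B := fun x hx ↦
    ⟨2, Ideal.mem_bot.1 (hI ▸ Ideal.pow_mem_pow (Ideal.Quotient.eq_zero_iff_mem.1 hx) 2)⟩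
  have hlift := bijective_subtypeMap_isIdempotentElem Q
    (Algebra.TensorProduct.map_surjective _ _ Function.surjective_id Ideal.Quotient.mk_surjective)
    (Algebra.TensorProduct.ker_map_id_le_nilradical q Ideal.Quotient.mk_surjective hker)
  have hcomp : q.comp = (Φ (B ⧸ I)).symm ∘ Subtype.map Q (fun _ he ↦ he.map Q) ∘ Φ B := by
    funext f
    rw [Function.comp_apply, Function.comp_apply, Equiv.eq_symm_apply]
    exact Subtype.ext (hΦ B (B ⧸ I) q f)
  rw [hcomp]
  exact (Φ _).symm.bijective.comp (hlift.comp (Φ B).bijective)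

theorem Module.Projective.exists_fin_dual_basis {R M : Type*} [CommRing R] [AddCommGroup M]
    [Module R M] [Module.Finite R M] [Module.Projective R M] :
    ∃ (n : ℕ) (a : Fin n → M) (φ : Fin n → Module.Dual R M), ∀ x, ∑ i, φ i x • a i = x := by
  obtain ⟨n, π, hπ⟩ := Module.Finite.exists_fin' R M
  obtain ⟨s, hs⟩ := Module.projective_lifting_property π LinearMap.id hπ
  refine ⟨n, fun i ↦ π (Pi.single i 1), fun i ↦ LinearMap.proj i ∘ₗ s, fun x ↦ ?_⟩
  calc ∑ i, s x i • π (Pi.single i 1) = π (∑ i, Pi.single i (s x i)) := by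
        simp only [map_sum, ← map_smul, ← Pi.single_smul', smul_eq_mul, mul_one]
    _ = x := by rw [Finset.univ_sum_single]; exact LinearMap.congr_fun hs x

noncomputable def MvPolynomial.quotientSpanAlgHomEquiv {R σ ι : Type*} [CommRing R]
    (rel : ι → MvPolynomial σ R) (T : Type*) [CommRing T] [Algebra R T] :
    (MvPolynomial σ R ⧸ Ideal.span (Set.range rel) →ₐ[R] T) ≃
      {t : σ → T // ∀ i, aeval t (rel i) = 0} where
  toFun f := ⟨fun s ↦ f (Ideal.Quotient.mk _ (X s)), fun i ↦ by
    have hf := AlgHom.congr_fun (aeval_unique (f.comp (Ideal.Quotient.mkₐ R _))) (rel i)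
    simpa [Function.comp_def,
      Ideal.Quotient.eq_zero_iff_mem.2 (Ideal.subset_span (Set.mem_range_self i))] using hf.symm⟩
  invFun t := Ideal.Quotient.liftₐ _ (aeval t.1) fun _ hp ↦ RingHom.mem_ker.1 <|
    Ideal.span_le.2 (Set.range_subset_iff.2 fun i ↦ RingHom.mem_ker.2 (t.2 i)) hp
  left_inv f := Ideal.Quotient.algHom_ext R <| algHom_ext fun s ↦
    (AlgHom.congr_fun (Ideal.Quotient.liftₐ_comp _ _ _) (X s)).trans (aeval_X _ _)
  right_inv t := by
    ext s
    change Ideal.Quotient.liftₐ _ _ _ (Ideal.Quotient.mkₐ R _ (X s)) = _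
    rw [← AlgHom.comp_apply, Ideal.Quotient.liftₐ_comp, aeval_X]

namespace Idempotents

variable {R A : Type*} [CommRing R] [CommRing A] [Algebra R A] {n : ℕ}
  (a : Fin n → A) (φ : Fin n → Module.Dual R A)
  (T : Type*) [CommRing T] [Algebra R T] {T' : Type*} [CommRing T'] [Algebra R T']

variable (R) in
noncomputable def ofCoords : (Fin n → T) →ₗ[R] A ⊗[R] T :=
  ∑ j, TensorProduct.mk R A T (a j) ∘ₗ LinearMap.proj j

noncomputable def coords : A ⊗[R] T →ₗ[R] Fin n → T :=
  LinearMap.pi fun i ↦ (TensorProduct.lid R T).toLinearMap ∘ₗ (φ i).rTensor T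

variable {T}

variable (R) in
theorem ofCoords_apply (t : Fin n → T) : ofCoords R a T t = ∑ j, a j ⊗ₜ t j := by
  simp [ofCoords]

theorem coords_tmul (x : A) (t : T) : coords φ T (x ⊗ₜ t) = fun i ↦ φ i x • t := by
  ext; simp [coords]

theorem ofCoords_map (g : T →ₐ[R] T') (t : Fin n → T) :
    Algebra.TensorProduct.map (AlgHom.id R A) g (ofCoords R a T t) = ofCoords R a T' (g ∘ t) := by
  simp [ofCoords_apply R]

theorem coords_map (g : T →ₐ[R] T') (z : A ⊗[R] T) :
    coords φ T' (Algebra.TensorProduct.map (AlgHom.id R A) g z) = g ∘ coords φ T z := by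
  induction z using TensorProduct.induction_on with
  | zero => ext; simp
  | tmul x t => ext; simp [coords_tmul]
  | add y z hy hz => ext i; simp [hy, hz]

theorem ofCoords_coords (hφ : ∀ x, ∑ i, φ i x • a i = x) (z : A ⊗[R] T) :
    ofCoords R a T (coords φ T z) = z := by
  induction z using TensorProduct.induction_on with
  | zero => simp
  | tmul x t =>
    calc ofCoords R a T (coords φ T (x ⊗ₜ t)) = (∑ i, φ i x • a i) ⊗ₜ t := by
          simp [ofCoords_apply R, coords_tmul, TensorProduct.sum_tmul, TensorProduct.smul_tmul]
      _ = x ⊗ₜ t := by rw [hφ]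
  | add y z hy hz => rw [map_add, map_add, hy, hz]

theorem isIdempotentElem_ofCoords (hφ : ∀ x, ∑ i, φ i x • a i = x) {t : Fin n → T}
    (ht : coords φ T (ofCoords R a T t * ofCoords R a T t) = t) :
    IsIdempotentElem (ofCoords R a T t) :=
  (ofCoords_coords a φ hφ _).symm.trans (congrArg _ ht)

noncomputable def fixedCoordsEquiv (hφ : ∀ x, ∑ i, φ i x • a i = x) :
    {t : Fin n → T // coords φ T (ofCoords R a T t * ofCoords R a T t) = t} ≃
      {e : A ⊗[R] T // IsIdempotentElem e} where
  toFun t := ⟨ofCoords R a T t, isIdempotentElem_ofCoords a φ hφ t.2⟩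
  invFun e := ⟨coords φ T e, by rw [ofCoords_coords a φ hφ, e.2.eq]⟩
  left_inv t := Subtype.ext <|
    (congrArg (coords φ T) (isIdempotentElem_ofCoords a φ hφ t.2).eq).symm.trans t.2
  right_inv e := Subtype.ext (ofCoords_coords a φ hφ e.1)

open MvPolynomial

variable (R) in
noncomputable def rel (i : Fin n) : MvPolynomial (Fin n) R :=
  X i - coords φ _ (ofCoords R a _ X * ofCoords R a _ X) i

abbrev CoordRing : Type _ := MvPolynomial (Fin n) R ⧸ Ideal.span (Set.range (rel R a φ))

theorem aeval_rel (t : Fin n → T) (i : Fin n) :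
    aeval t (rel R a φ i) = t i - coords φ T (ofCoords R a T t * ofCoords R a T t) i := by
  have hX : (aeval t : MvPolynomial (Fin n) R →ₐ[R] T) ∘ X = t := funext (aeval_X t)
  rw [rel, map_sub, aeval_X, ← Function.comp_apply (f := aeval t), ← coords_map, map_mul,
    ofCoords_map, hX]

theorem aeval_rel_eq_zero_iff (t : Fin n → T) :
    (∀ i, aeval t (rel R a φ i) = 0) ↔ coords φ T (ofCoords R a T t * ofCoords R a T t) = t := by
  rw [funext_iff]
  exact forall_congr' fun i ↦ by rw [aeval_rel, sub_eq_zero, eq_comm]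

variable (T) in
noncomputable def algHomEquiv (hφ : ∀ x, ∑ i, φ i x • a i = x) :
    (CoordRing a φ →ₐ[R] T) ≃ {e : A ⊗[R] T // IsIdempotentElem e} :=
  (quotientSpanAlgHomEquiv (rel R a φ) T).trans <|
    (Equiv.subtypeEquivRight (aeval_rel_eq_zero_iff a φ)).trans (fixedCoordsEquiv a φ hφ)

theorem algHomEquiv_apply (hφ : ∀ x, ∑ i, φ i x • a i = x) (f : CoordRing a φ →ₐ[R] T) :
    (algHomEquiv a φ T hφ f : A ⊗[R] T) =
      ofCoords R a T (fun i ↦ f (Ideal.Quotient.mk _ (X i))) := by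
  simp [algHomEquiv, fixedCoordsEquiv, quotientSpanAlgHomEquiv]

theorem algHomEquiv_comp (hφ : ∀ x, ∑ i, φ i x • a i = x) (g : T →ₐ[R] T')
    (f : CoordRing a φ →ₐ[R] T) :
    (algHomEquiv a φ T' hφ (g.comp f) : A ⊗[R] T') =
      Algebra.TensorProduct.map (AlgHom.id R A) g (algHomEquiv a φ T hφ f) := by
  rw [algHomEquiv_apply, algHomEquiv_apply, ofCoords_map]
  rfl

instance : Algebra.FinitePresentation R (CoordRing a φ) :=
  .quotient (Submodule.fg_span (Set.finite_range _))

end Idempotents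

theorem Idempotents.etale_coordRing {R A : Type u} [CommRing R] [CommRing A] [Algebra R A] {n : ℕ}
    (a : Fin n → A) (φ : Fin n → Module.Dual R A) (hφ : ∀ x, ∑ i, φ i x • a i = x) :
    Algebra.Etale R (CoordRing a φ) where
  formallyEtale := .of_equiv_idempotents (algHomEquiv a φ · hφ)
    fun _ _ _ _ _ _ ↦ algHomEquiv_comp a φ hφ
  finitePresentation := inferInstance

/-- For `f : Z → X` finite locally free with `A = f_* O_Z` (affinely: `A` a commutative
`R`-algebra, finite and projective as an `R`-module), the idempotent scheme `Id(Z) → X` is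
étale: the functor of idempotents of `A ⊗_R -` is representable by an étale `R`-algebra. -/
theorem idempotent_scheme_etale (R A : Type u) [CommRing R] [CommRing A] [Algebra R A]
    [Module.Finite R A] [Module.Projective R A] :
    Nonempty (EtaleIdempotentModel R A) := by
  obtain ⟨n, a, φ, hφ⟩ := Module.Projective.exists_fin_dual_basis (R := R) (M := A)
  exact ⟨{ C := Idempotents.CoordRing a φ
           etale := Idempotents.etale_coordRing a φ hφ
           represents := fun T _ _ ↦ ⟨Idempotents.algHomEquiv a φ T hφ⟩ }⟩
end

section
/- Let X be an affine scheme, n ≥ 1, d ∈ ℤ, and let u = (u₁, …, u_n) be global sections of O(d_u) on P^n_X such that the restriction of uᵢ to the hyperplane at infinity P^{n-1}_X equals tᵢ^{d_u} (the d_u-th power of the i-th coordinate section). Then the common vanishing locus Z(u₁, …, u_n) ⊂ P^n_X is contained in the affine chart A^n_X and is finite over X. -/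
open MvPolynomial

section Aux

variable {R : Type*} [CommRing R] {n : ℕ}

private lemma exists_decomp (p : MvPolynomial (Fin (n + 1)) R) :
    ∃ q, p = aeval (Fin.cons 0 fun j : Fin n => (X j.succ : MvPolynomial (Fin (n + 1)) R)) p
      + X 0 * q := by
  induction p using MvPolynomial.induction_on with
  | C a => exact ⟨0, by simp⟩
  | add p q hp hq =>
    obtain ⟨qp, hp⟩ := hp
    obtain ⟨qq, hq⟩ := hq
    exact ⟨qp + qq, by rw [map_add]; linear_combination hp + hq⟩
  | mul_X p j hp =>
    obtain ⟨q, hpq⟩ := hp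
    induction j using Fin.cases with
    | zero => exact ⟨p, by rw [map_mul, aeval_X, Fin.cons_zero, mul_zero, zero_add, mul_comm]⟩
    | succ k =>
      exact ⟨q * X k.succ, by
        rw [map_mul, aeval_X, Fin.cons_succ]
        linear_combination (X k.succ : MvPolynomial (Fin (n + 1)) R) * hpq⟩

private lemma td_aeval_le (p : MvPolynomial (Fin (n + 1)) R) :
    (aeval (Fin.cons 1 fun j : Fin n => (X j : MvPolynomial (Fin n) R)) p).totalDegree
      ≤ p.totalDegree := by
  conv_lhs => rw [p.as_sum]
  rw [map_sum]
  refine totalDegree_finsetSum_le fun α hα => ?_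
  rw [aeval_monomial, MvPolynomial.algebraMap_eq]
  refine (totalDegree_mul _ _).trans ?_
  rw [totalDegree_C, zero_add, Finsupp.prod]
  refine (totalDegree_finset_prod _ _).trans (le_trans ?_ (le_totalDegree hα))
  rw [Finsupp.sum]
  refine Finset.sum_le_sum fun i _ => ?_
  refine (totalDegree_pow _ _).trans ?_
  have h1 : (Fin.cons (α := fun _ : Fin (n + 1) => MvPolynomial (Fin n) R) 1 (fun j : Fin n => X j) i).totalDegree ≤ 1 := by
    induction i using Fin.cases with
    | zero => simp
    | succ k =>
      rw [Fin.cons_succ, X]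
      refine (totalDegree_monomial_le _ _).trans ?_
      simp
  calc α i * (Fin.cons (α := fun _ : Fin (n + 1) => MvPolynomial (Fin n) R) 1 (fun j : Fin n => X j) i).totalDegree
      ≤ α i * 1 := Nat.mul_le_mul_left _ h1
    _ = α i := Nat.mul_one _

end Aux

/-- Let `u₁, …, u_n` be homogeneous forms of degree `d` on `P^n_X` (`X = Spec R` affine, with
homogeneous coordinates `t_∞ = X 0, t₁ = X 1, …, t_n = X n`) whose restrictions to the
hyperplane at infinity `{t_∞ = 0}` are `tᵢ^d`. Then the common vanishing locus `Z(u)` avoids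
the hyperplane at infinity (every coordinate lies in the radical of `(t_∞, u₁, …, u_n)`),
i.e. `Z(u)` is contained in the affine chart `A^n_X`, and `Z(u)` is finite over `X`: the
coordinate ring of the dehomogenization `{t_∞ = 1}` is a finite `R`-module. -/
theorem vanishing_locus_affine_and_finite (R : Type*) [CommRing R] (n d : ℕ) (hn : 0 < n)
    (hd : 0 < d) (u : Fin n → MvPolynomial (Fin (n + 1)) R)
    (hhom : ∀ i, (u i).IsHomogeneous d)
    (hinf : ∀ i, aeval (Fin.cons 0 fun j : Fin n => (X j.succ : MvPolynomial (Fin (n + 1)) R))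
        (u i) = X i.succ ^ d) :
    (∀ j : Fin (n + 1),
        (X j : MvPolynomial (Fin (n + 1)) R) ∈
          (Ideal.span ({X 0} ∪ Set.range u)).radical) ∧
    Module.Finite R (MvPolynomial (Fin n) R ⧸
      Ideal.span (Set.range fun i =>
        aeval (Fin.cons 1 fun j : Fin n => (X j : MvPolynomial (Fin n) R)) (u i))) := by
  -- decompositions  u i = X i.succ ^ d + X 0 * q i
  have hdec : ∀ i, ∃ q, u i = X i.succ ^ d + X 0 * q := by
    intro i
    obtain ⟨q, hq⟩ := exists_decomp (u i)
    rw [hinf i] at hq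
    exact ⟨q, hq⟩
  choose q hq using hdec
  constructor
  · intro j
    induction j using Fin.cases with
    | zero => exact Ideal.le_radical (Ideal.subset_span (Set.mem_union_left _ rfl))
    | succ i =>
      rw [Ideal.mem_radical_iff]
      refine ⟨d, ?_⟩
      have h1 : (X i.succ : MvPolynomial (Fin (n + 1)) R) ^ d = u i - X 0 * q i := by
        rw [hq i]; ring
      rw [h1]
      exact Ideal.sub_mem _ (Ideal.subset_span (Set.mem_union_right _ ⟨i, rfl⟩))
        (Ideal.mul_mem_right _ _ (Ideal.subset_span (Set.mem_union_left _ rfl)))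
  · -- finiteness
    set e : MvPolynomial (Fin (n + 1)) R →ₐ[R] MvPolynomial (Fin n) R :=
      aeval (Fin.cons 1 fun j : Fin n => (X j : MvPolynomial (Fin n) R)) with he
    set f : Fin n → MvPolynomial (Fin n) R := fun i => e (u i) with hf
    set I : Ideal (MvPolynomial (Fin n) R) := Ideal.span (Set.range f) with hI
    -- each q i is homogeneous of degree d - 1
    have hqhom : ∀ i, (q i).IsHomogeneous (d - 1) := by
      intro i
      have h2 : ((X 0 : MvPolynomial (Fin (n + 1)) R) * q i).IsHomogeneous d := by
        have h3 : (X (0 : Fin (n + 1)) : MvPolynomial (Fin (n + 1)) R) * q i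
            = u i - X i.succ ^ d := by rw [hq i]; ring
        rw [h3]
        have hx := (isHomogeneous_X R i.succ).pow d
        rw [one_mul] at hx
        exact (hhom i).sub hx
      intro α hα
      have h4 : coeff (Finsupp.single (0 : Fin (n + 1)) 1 + α)
          ((X (0 : Fin (n + 1)) : MvPolynomial (Fin (n + 1)) R) * q i) ≠ 0 := by
        rwa [coeff_X_mul]
      have h5 := h2 h4
      rw [map_add] at h5
      have h6 : (Finsupp.weight (1 : Fin (n + 1) → ℕ)) (Finsupp.single (0 : Fin (n + 1)) 1)
          = 1 := by
        rw [Finsupp.weight_apply, Finsupp.sum_single_index] <;> simp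
      omega
    -- f i = X i ^ d + r i  with  totalDegree (r i) < d
    have hfr : ∀ i, f i = X i ^ d + e (q i) := by
      intro i
      rw [hf]
      simp only [hq i, map_add, map_mul, map_pow, he, aeval_X, Fin.cons_succ, Fin.cons_zero,
        one_mul]
    have hrd : ∀ i, (e (q i)).totalDegree < d := by
      intro i
      refine lt_of_le_of_lt ((td_aeval_le (q i)).trans ((hqhom i).totalDegree_le)) ?_
      omega
    classical
    rw [Module.finite_def]
    set π := Ideal.Quotient.mkₐ R I with hπ
    set S : Finset (MvPolynomial (Fin n) R ⧸ I) := Finset.image (fun a : Fin n → ℕ =>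
        π (monomial (Finsupp.equivFunOnFinite.symm a) 1))
        (Fintype.piFinset fun _ : Fin n => Finset.range d) with hS
    refine ⟨S, ?_⟩
    rw [eq_top_iff]
    have main : ∀ N (p : MvPolynomial (Fin n) R), p.totalDegree ≤ N →
        π p ∈ Submodule.span R (S : Set (MvPolynomial (Fin n) R ⧸ I)) := by
      intro N
      induction N using Nat.strong_induction_on with
      | _ N IH =>
        intro p hp
        rw [p.as_sum, map_sum]
        refine Submodule.sum_mem _ fun α hα => ?_
        have hmono : (monomial α (coeff α p) : MvPolynomial (Fin n) R)
            = coeff α p • monomial α 1 := by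
          rw [smul_monomial, smul_eq_mul, mul_one]
        rw [hmono, map_smul]
        refine Submodule.smul_mem _ _ ?_
        by_cases hcase : ∀ i, α i < d
        · refine Submodule.subset_span ?_
          refine Finset.mem_coe.2 (Finset.mem_image.2 ⟨fun i => α i, ?_, ?_⟩)
          · rw [Fintype.mem_piFinset]
            exact fun i => Finset.mem_range.2 (hcase i)
          · rw [Finsupp.equivFunOnFinite_symm_coe]
        · push_neg at hcase
          obtain ⟨i, hi⟩ := hcase
          set β := α - Finsupp.single i d with hβdef
          have hβ : Finsupp.single i d + β = α :=
            add_tsub_cancel_of_le (Finsupp.single_le_iff.2 hi)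
          have hdecomp : (monomial α (1 : R) : MvPolynomial (Fin n) R)
              = X i ^ d * monomial β 1 := by
            rw [X_pow_eq_monomial, monomial_mul, one_mul, hβ]
          have hfI : π (f i * monomial β 1) = 0 := by
            rw [hπ, Ideal.Quotient.mkₐ_eq_mk]
            exact Ideal.Quotient.eq_zero_iff_mem.2
              (Ideal.mul_mem_right _ _ (Ideal.subset_span ⟨i, rfl⟩))
          have hneg : π (monomial α (1 : R))
              = - π (e (q i) * monomial β 1) := by
            have hx : (X i : MvPolynomial (Fin n) R) ^ d * monomial β 1
                = f i * monomial β 1 - e (q i) * monomial β 1 := by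
              rw [hfr i]; ring
            rw [hdecomp, hx, map_sub, hfI, zero_sub]
          rw [hneg]
          refine Submodule.neg_mem _ ?_
          have hsum : (α.sum fun _ e => e) = d + (β.sum fun _ e => e) := by
            rw [← hβ, Finsupp.sum_add_index' (fun _ => rfl) (fun _ _ _ => rfl),
              Finsupp.sum_single_index rfl]
          have hαN : (α.sum fun _ e => e) ≤ N := le_trans (le_totalDegree hα) hp
          have htd : (e (q i) * monomial β 1).totalDegree < N := by
            have h7 : (e (q i) * monomial β 1).totalDegree
                ≤ (e (q i)).totalDegree + (monomial β (1 : R)).totalDegree :=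
              totalDegree_mul _ _
            have h8 : (monomial β (1 : R)).totalDegree ≤ β.sum fun _ e => e :=
              totalDegree_monomial_le _ _
            have h9 := hrd i
            have h10 : (monomial β (1 : R)).totalDegree ≤ β.sum fun _ e => e := h8
            omega
          exact IH _ htd _ le_rfl
    rintro x -
    obtain ⟨p, rfl⟩ := Ideal.Quotient.mkₐ_surjective R I x
    exact main p.totalDegree p le_rfl
end
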